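/- Let n ≥ 2, let α > 0 and β > 0, let e, f ∈ ℝⁿ be orthonormal vectors, let c, s' ∈ ℝ with c² + s'² = 1, and set ν = c e + s' f. Define the symmetric bilinear form 𝔥(u,v) = (1/α) ( ⟨e,u⟩⟨e,v⟩ − β⁻² (⟨u,v⟩ − ⟨e,u⟩⟨e,v⟩) ). Let v ∈ ℝⁿ be decomposed as v = v₁ e + v₂' f + w' with ⟨w', e⟩ = ⟨w', f⟩ = 0, and set v₂ = v₂'/β, w = w'/β, s = s'/β. Then the energy E(v) := 𝔥(v,ν)² − (1/2) 𝔥(v,v) 𝔥(ν,ν) satisfies the exact identity E(v) = (1/α²) ( (1/2)(c² + s²)(v₁² + v₂²) − 2 c s v₁ v₂ + (1/2)(c² − s²) ‖w‖² ). -/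
import Mathlib


open scoped RealInnerProductSpace

/-- The Lorentzian bilinear form
`𝔥(u,v) = (1/α) (⟨e,u⟩⟨e,v⟩ − β⁻² (⟨u,v⟩ − ⟨e,u⟩⟨e,v⟩))`. -/
noncomputable def lorForm {n : ℕ} (α β : ℝ) (e u v : EuclideanSpace ℝ (Fin n)) : ℝ :=
  (1 / α) * (⟪e, u⟫ * ⟪e, v⟫ - (β ^ 2)⁻¹ * (⟪u, v⟫ - ⟪e, u⟫ * ⟪e, v⟫))

/-- with `e, f` orthonormal, `ν = c e + s' f` where `c² + s'² = 1`,
`v = v₁ e + v₂' f + w'` where `w' ⟂ e, f`, and the rescaled quantities `v₂ = v₂'/β`,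
`w = w'/β`, `s = s'/β`, the energy `E(v) = 𝔥(v,ν)² − (1/2) 𝔥(v,v) 𝔥(ν,ν)` satisfies
`E(v) = (1/α²)((1/2)(c²+s²)(v₁²+v₂²) − 2 c s v₁ v₂ + (1/2)(c²−s²)‖w‖²)`. -/
theorem energy_density_exact_identity
    (n : ℕ) (hn : 2 ≤ n) (α β : ℝ) (hα : 0 < α) (hβ : 0 < β)
    (e f : EuclideanSpace ℝ (Fin n)) (he : ‖e‖ = 1) (hf : ‖f‖ = 1) (hef : ⟪e, f⟫ = 0)
    (c s' : ℝ) (hcs : c ^ 2 + s' ^ 2 = 1)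
    (v₁ v₂' : ℝ) (w' : EuclideanSpace ℝ (Fin n)) (hw'e : ⟪w', e⟫ = 0) (hw'f : ⟪w', f⟫ = 0)
    (v ν : EuclideanSpace ℝ (Fin n))
    (hv : v = v₁ • e + v₂' • f + w') (hν : ν = c • e + s' • f) :
    lorForm α β e v ν ^ 2 - (1 / 2) * lorForm α β e v v * lorForm α β e ν ν
      = (1 / α ^ 2) *
          ((1 / 2) * (c ^ 2 + (s' / β) ^ 2) * (v₁ ^ 2 + (v₂' / β) ^ 2)
            - 2 * c * (s' / β) * v₁ * (v₂' / β)
            + (1 / 2) * (c ^ 2 - (s' / β) ^ 2) * ‖(1 / β) • w'‖ ^ 2) := by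
  have hee : ⟪e, e⟫ = 1 := by rw [real_inner_self_eq_norm_sq, he]; norm_num
  have hff : ⟪f, f⟫ = 1 := by rw [real_inner_self_eq_norm_sq, hf]; norm_num
  have hfe : ⟪f, e⟫ = 0 := by rw [real_inner_comm]; exact hef
  have hew : ⟪e, w'⟫ = 0 := by rw [real_inner_comm]; exact hw'e
  have hfw : ⟪f, w'⟫ = 0 := by rw [real_inner_comm]; exact hw'f
  have hww : ⟪w', w'⟫ = ‖w'‖ ^ 2 := by rw [real_inner_self_eq_norm_sq]
  have hnw : ‖(1 / β) • w'‖ ^ 2 = (1 / β) ^ 2 * ‖w'‖ ^ 2 := by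
    rw [norm_smul, mul_pow, Real.norm_eq_abs,
      abs_of_pos (by positivity : (0:ℝ) < 1 / β)]
  subst hv hν
  simp only [lorForm, inner_add_left, inner_add_right, real_inner_smul_left,
    real_inner_smul_right, hee, hff, hef, hfe, hew, hfw, hw'e, hw'f, hww, hnw]
  have hβ0 : (β:ℝ) ≠ 0 := ne_of_gt hβ
  have hα0 : (α:ℝ) ≠ 0 := ne_of_gt hα
  field_simp
  ring_nf
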